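/- Let {(N_k,B_k)}_{k=1}^∞ satisfy N_k ≥ #B_k ≥ 2 for all k, with B_k ⊆ ℤ finite, and suppose the infinite convolution μ of {(N_k,B_k)} exists and the family {ν_{>k}}_{k=1}^∞ is tight. Then the zero set of μ̂ satisfies Z(μ̂) = ⋃_{k=1}^∞ N_1N_2⋯N_k · Z(M_{B_k}). -/

import Mathlib

open MeasureTheory Filter Topology Complex Polynomial

/-- The exponential function `e_l(x) = e^{-2πi l x}`. -/
noncomputable def expFun (l x : ℝ) : ℂ :=
  Complex.exp (((-2 * Real.pi * l * x : ℝ) : ℂ) * Complex.I)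

/-- The Fourier transform `μ̂(ξ) = ∫ e^{-2πiξx} dμ(x)` of a measure on `ℝ`. -/
noncomputable def ft (μ : Measure ℝ) (ξ : ℝ) : ℂ := ∫ x, expFun ξ x ∂μ

/-- `Λ` is an orthogonal (orthonormal) set for `μ`: the exponentials `e_λ`, `λ ∈ Λ`, form an
orthonormal family in `L²(μ)`. -/
def IsOrthoSet (μ : Measure ℝ) (Λ : Set ℝ) : Prop :=
  ∀ l₁ ∈ Λ, ∀ l₂ ∈ Λ,
    (∫ x, (starRingEnd ℂ) (expFun l₁ x) * expFun l₂ x ∂μ) = if l₁ = l₂ then 1 else 0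

/-- `(μ, Λ)` is a spectral pair: the exponentials `{e_λ : λ ∈ Λ}` form an orthonormal family
which is maximal (total) in `L²(μ)`, i.e. an orthonormal basis of `L²(μ)`. -/
def IsSpectralPair (μ : Measure ℝ) (Λ : Set ℝ) : Prop :=
  IsOrthoSet μ Λ ∧
  ∀ f : ℝ → ℂ, MemLp f 2 μ →
    (∀ l ∈ Λ, (∫ x, (starRingEnd ℂ) (expFun l x) * f x ∂μ) = 0) → f =ᵐ[μ] 0

/-- `μ` is a spectral measure: some countable `Λ ⊆ ℝ` is a spectrum of `μ`. -/
def IsSpectralMeasure (μ : Measure ℝ) : Prop :=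
  ∃ Λ : Set ℝ, Λ.Countable ∧ IsSpectralPair μ Λ

/-- The uniform probability measure `δ_A` on a finite set `A ⊆ ℝ`. -/
noncomputable def uniformD (A : Finset ℝ) : Measure ℝ :=
  (A.card : ENNReal)⁻¹ • ∑ a ∈ A, Measure.dirac a

/-- The measure `δ_{c⁻¹ B}` for a finite set `B ⊆ ℤ` and a scaling factor `c`. -/
noncomputable def scaledB (B : Finset ℤ) (c : ℝ) : Measure ℝ :=
  uniformD (B.image fun b : ℤ => (b : ℝ) / c)

/-- The finite convolutions `μ_k = δ_{N₁⁻¹B₁} ∗ δ_{(N₁N₂)⁻¹B₂} ∗ ⋯ ∗ δ_{(N₁⋯N_k)⁻¹B_k}`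
(the sequences are indexed starting from `k = 1`; `μ_0 = δ_0`). -/
noncomputable def partialConv (N : ℕ → ℕ) (B : ℕ → Finset ℤ) : ℕ → Measure ℝ
  | 0 => Measure.dirac 0
  | k + 1 =>
      MeasureTheory.Measure.conv (partialConv N B k)
        (scaledB (B (k + 1)) (∏ i ∈ Finset.Icc 1 (k + 1), (N i : ℝ)))

/-- `μ` is the infinite convolution of `{(N_k, B_k)}_{k=1}^∞`: it is a Borel probability
measure and the finite convolutions `μ_k` converge weakly to `μ`. -/
def IsInfiniteConv (N : ℕ → ℕ) (B : ℕ → Finset ℤ) (μ : Measure ℝ) : Prop :=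
  IsProbabilityMeasure μ ∧
    ∀ f : BoundedContinuousFunction ℝ ℝ,
      Tendsto (fun k => ∫ x, f x ∂(partialConv N B k)) atTop (𝓝 (∫ x, f x ∂μ))

/-- `ν` is the tail infinite convolution `ν_{>k} = δ_{N_{k+1}⁻¹B_{k+1}} ∗ ⋯`. -/
def IsNuGt (N : ℕ → ℕ) (B : ℕ → Finset ℤ) (k : ℕ) (ν : Measure ℝ) : Prop :=
  IsInfiniteConv (fun j => N (k + j)) (fun j => B (k + j)) ν

/-- A family of measures is tight. -/
def IsTightFamily {ι : Type*} (Φ : ι → Measure ℝ) : Prop :=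
  ∀ ε : ENNReal, 0 < ε → ∃ K : Set ℝ, IsCompact K ∧ ∀ i, 1 - ε < Φ i K

/-- `B` is a complete residue system modulo `M`: each residue class modulo `M` contains
exactly one element of `B`. -/
def IsCRS (B : Finset ℤ) (M : ℕ) : Prop :=
  ∀ r : ZMod M, ∃! b : ℤ, b ∈ B ∧ ((b : ZMod M) = r)

/-- `∑_{b ∈ B} x^{b - b⁎}` where `b⁎ = min B`, i.e. `x^{-b⁎} ∑_{b ∈ B} x^b`. -/
noncomputable def numerPoly (B : Finset ℤ) : Polynomial ℤ :=
  ∑ b ∈ B, Polynomial.X ^ (b - (B.min.untopD 0)).toNat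

/-- `∑_{k=0}^{n-1} x^k`. -/
noncomputable def geomPoly (n : ℕ) : Polynomial ℤ :=
  ∑ k ∈ Finset.range n, Polynomial.X ^ k

/-- The character polynomial `f_B(x) = (∑_{b∈B} x^b)/(x^{b⁎} ∑_{k=0}^{#B-1} x^k)`,
obtained by dividing by the monic polynomial `∑_{k=0}^{#B-1} x^k`. -/
noncomputable def charPoly (B : Finset ℤ) : Polynomial ℤ :=
  numerPoly B /ₘ geomPoly B.card

/-- `B` (a complete residue system modulo `M`) satisfies the uniform discrete zero
condition: `Z(f_B ∘ e^{-2πix}) ⊆ {j/M : j ∈ ℤ ∖ Mℤ}`. -/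
def SatisfiesUDZ (B : Finset ℤ) (M : ℕ) : Prop :=
  {x : ℝ | Polynomial.aeval (expFun x 1) (charPoly B) = 0} ⊆
    {x : ℝ | ∃ j : ℤ, ¬ ((M : ℤ) ∣ j) ∧ x = (j : ℝ) / M}

/-- `M_B(ξ) = (1/#B) ∑_{b∈B} e^{-2πibξ}`, the Fourier transform of `δ_B`. -/
noncomputable def MB (B : Finset ℤ) (ξ : ℝ) : ℂ :=
  (B.card : ℂ)⁻¹ * ∑ b ∈ B, expFun (b : ℝ) ξ

/-- `Q_{μ,Λ}(ξ) = ∑_{λ ∈ Λ} |μ̂(ξ+λ)|²`. -/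
noncomputable def Qf (μ : Measure ℝ) (Λ : Set ℝ) (ξ : ℝ) : ℝ :=
  ∑' l : Λ, ‖ft μ (ξ + (l : ℝ))‖ ^ 2


/-!
Weak convergence gives pointwise convergence of Fourier transforms, hence the factorization
`μ̂(ξ) = μ̂_k(ξ) · ν̂_{>k}(ξ / N₁⋯N_k)` with `μ̂_k(ξ) = ∏_{j ≤ k} M_{B_j}(ξ / N₁⋯N_j)`. A zero of a
factor `M_{B_j}` is therefore a zero of `μ̂`. Conversely, if `μ̂(ξ) = 0` but no factor vanishes,
then `ν̂_{>k}(ξ / N₁⋯N_k) = 0` for every `k`. But `N₁⋯N_k ≥ 2^k → ∞`, and tightness makes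
`|ν̂_{>k}(η) - 1| ≤ |2πη| R + 2 ν_{>k}([-R, R]ᶜ)` uniformly small, so these values tend to `1`.
-/

open Finset (Icc)
open scoped RealInnerProductSpace

lemma ft_eq_charFun (μ : Measure ℝ) (ξ : ℝ) : ft μ ξ = charFun μ (-2 * Real.pi * ξ) := by
  simp only [ft, expFun, charFun_apply_real]
  push_cast
  rfl

lemma ft_conv (μ ν : Measure ℝ) [IsFiniteMeasure μ] [IsFiniteMeasure ν] (ξ : ℝ) :
    ft (μ ∗ ν) ξ = ft μ ξ * ft ν ξ := by
  simp only [ft_eq_charFun, charFun_conv]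

lemma ft_dirac_zero (ξ : ℝ) : ft (Measure.dirac 0) ξ = 1 := by
  simp [ft_eq_charFun]

lemma ft_uniformD (A : Finset ℝ) (ξ : ℝ) :
    ft (uniformD A) ξ = (A.card : ℂ)⁻¹ * ∑ a ∈ A, expFun ξ a := by
  rw [ft, uniformD, integral_smul_measure,
    integral_finsetSum_measure fun a _ => integrable_dirac enorm_lt_top]
  simp [integral_dirac, Complex.real_smul]

lemma isProbabilityMeasure_uniformD {A : Finset ℝ} (hA : A.Nonempty) :
    IsProbabilityMeasure (uniformD A) := by
  constructor
  simp [uniformD, ENNReal.inv_mul_cancel, hA.ne_empty]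

lemma ft_scaledB (B : Finset ℤ) {c : ℝ} (hc : c ≠ 0) (ξ : ℝ) :
    ft (scaledB B c) ξ = MB B (ξ / c) := by
  have hinj : Set.InjOn (fun b : ℤ => (b : ℝ) / c) B := fun a _ b _ h => by
    simpa [div_left_inj' hc] using h
  rw [scaledB, ft_uniformD, MB, Finset.card_image_of_injOn hinj, Finset.sum_image hinj]
  congr 2 with b
  simp only [expFun]
  ring_nf

lemma isProbabilityMeasure_scaledB {B : Finset ℤ} (hB : B.Nonempty) (c : ℝ) :
    IsProbabilityMeasure (scaledB B c) :=
  isProbabilityMeasure_uniformD (hB.image _)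

lemma prod_Icc_one_add {M : Type*} [CommMonoid M] (f : ℕ → M) (m n : ℕ) :
    ∏ j ∈ Icc 1 (m + n), f j = (∏ j ∈ Icc 1 m, f j) * ∏ j ∈ Icc 1 n, f (m + j) := by
  induction n with
  | zero => simp
  | succ n ih =>
    rw [← add_assoc, Finset.prod_Icc_succ_top (by omega), ih,
      Finset.prod_Icc_succ_top (by omega), mul_assoc, add_assoc]

section partialConv

variable {N : ℕ → ℕ} {B : ℕ → Finset ℤ}

lemma prod_Icc_natCast_ne_zero (hN : ∀ k ≥ 1, N k ≠ 0) (n : ℕ) :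
    ∏ i ∈ Icc 1 n, (N i : ℝ) ≠ 0 :=
  Finset.prod_ne_zero_iff.2 fun i hi => Nat.cast_ne_zero.2 (hN i (Finset.mem_Icc.1 hi).1)

lemma isProbabilityMeasure_partialConv (hB : ∀ k ≥ 1, (B k).Nonempty) (n : ℕ) :
    IsProbabilityMeasure (partialConv N B n) := by
  induction n with
  | zero => rw [partialConv]; infer_instance
  | succ n ih =>
    have := isProbabilityMeasure_scaledB (hB (n + 1) (by omega)) (∏ i ∈ Icc 1 (n + 1), (N i : ℝ))
    rw [partialConv]
    infer_instance

lemma ft_partialConv (hB : ∀ k ≥ 1, (B k).Nonempty) (hN : ∀ k ≥ 1, N k ≠ 0) (ξ : ℝ) (n : ℕ) :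
    ft (partialConv N B n) ξ = ∏ j ∈ Icc 1 n, MB (B j) (ξ / ∏ i ∈ Icc 1 j, (N i : ℝ)) := by
  induction n with
  | zero => simp [partialConv, ft_dirac_zero]
  | succ n ih =>
    have := isProbabilityMeasure_partialConv (N := N) hB n
    have := isProbabilityMeasure_scaledB (hB (n + 1) (by omega)) (∏ i ∈ Icc 1 (n + 1), (N i : ℝ))
    rw [partialConv, ft_conv, ih, ft_scaledB _ (prod_Icc_natCast_ne_zero hN _)]
    exact (Finset.prod_Icc_succ_top (by omega) _).symm

lemma ft_partialConv_add (hB : ∀ k ≥ 1, (B k).Nonempty) (hN : ∀ k ≥ 1, N k ≠ 0)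
    (ξ : ℝ) (m n : ℕ) :
    ft (partialConv N B (m + n)) ξ = ft (partialConv N B m) ξ *
      ft (partialConv (fun j => N (m + j)) (fun j => B (m + j)) n)
        (ξ / ∏ i ∈ Icc 1 m, (N i : ℝ)) := by
  simp only [ft_partialConv hB hN,
    ft_partialConv (fun j hj => hB (m + j) (by omega)) (fun j hj => hN (m + j) (by omega)),
    div_div, ← prod_Icc_one_add]

end partialConv

section infiniteConv

variable {N : ℕ → ℕ} {B : ℕ → Finset ℤ} {μ : Measure ℝ}

lemma tendsto_ft_partialConv (hB : ∀ k ≥ 1, (B k).Nonempty) (hμ : IsInfiniteConv N B μ)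
    (ξ : ℝ) : Tendsto (fun n => ft (partialConv N B n) ξ) atTop (𝓝 (ft μ ξ)) := by
  let P (n : ℕ) : ProbabilityMeasure ℝ := ⟨_, isProbabilityMeasure_partialConv (N := N) hB n⟩
  have hP : Tendsto P atTop (𝓝 ⟨μ, hμ.1⟩) :=
    ProbabilityMeasure.tendsto_iff_forall_integral_tendsto.2 hμ.2
  simp only [ft_eq_charFun]
  exact ProbabilityMeasure.tendsto_iff_tendsto_charFun.1 hP _

lemma ft_eq_ft_partialConv_mul_ft_tail (hB : ∀ k ≥ 1, (B k).Nonempty) (hN : ∀ k ≥ 1, N k ≠ 0)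
    (hμ : IsInfiniteConv N B μ) {m : ℕ} {ν : Measure ℝ} (hν : IsNuGt N B m ν) (ξ : ℝ) :
    ft μ ξ = ft (partialConv N B m) ξ * ft ν (ξ / ∏ i ∈ Icc 1 m, (N i : ℝ)) := by
  have hshift : Tendsto (fun n => ft (partialConv N B (m + n)) ξ) atTop (𝓝 (ft μ ξ)) :=
    (tendsto_ft_partialConv hB hμ ξ).comp
      ((tendsto_add_atTop_nat m).congr fun n => add_comm n m)
  refine tendsto_nhds_unique hshift ?_
  simp only [ft_partialConv_add hB hN]
  exact (tendsto_ft_partialConv (fun j hj => hB (m + j) (by omega)) hν _).const_mul _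

end infiniteConv

lemma norm_charFun_sub_one_le {E : Type*} [NormedAddCommGroup E] [InnerProductSpace ℝ E]
    [MeasurableSpace E] [BorelSpace E] (ν : Measure E) [IsProbabilityMeasure ν] (t : E)
    {R : ℝ} (hR : 0 ≤ R) :
    ‖charFun ν t - 1‖ ≤ ‖t‖ * R + 2 * ν.real (Metric.closedBall 0 R)ᶜ := by
  set s := Metric.closedBall (0 : E) R
  have hexp : Integrable (fun x => cexp (⟪x, t⟫ * I)) ν :=
    (BoundedContinuousFunction.innerProbChar t).integrable ν
  have hint : Integrable (fun x => cexp (⟪x, t⟫ * I) - 1) ν := hexp.sub (integrable_const 1)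
  have h0 : charFun ν t - 1 = ∫ x, (cexp (⟪x, t⟫ * I) - 1) ∂ν := by
    rw [integral_sub hexp (integrable_const 1)]
    simp [charFun_apply]
  have hin (x : E) (hx : x ∈ s) : ‖cexp (⟪x, t⟫ * I) - 1‖ ≤ ‖t‖ * R := by
    rw [mul_comm]
    calc ‖cexp (I * ⟪x, t⟫) - 1‖ ≤ ‖⟪x, t⟫‖ := Real.norm_exp_I_mul_ofReal_sub_one_le
      _ ≤ ‖x‖ * ‖t‖ := norm_inner_le_norm x t
      _ ≤ ‖t‖ * R := by rw [mul_comm]; gcongr; simpa [s] using hx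
  have hout (x : E) : ‖cexp (⟪x, t⟫ * I) - 1‖ ≤ 2 :=
    (norm_sub_le _ _).trans (by rw [norm_exp_ofReal_mul_I, norm_one]; norm_num)
  rw [h0, ← integral_add_compl measurableSet_closedBall hint]
  calc _ ≤ ‖t‖ * R * ν.real s + 2 * ν.real sᶜ :=
        norm_add_le_of_le (norm_setIntegral_le_of_norm_le_const (measure_lt_top _ _) hin)
          (norm_setIntegral_le_of_norm_le_const (measure_lt_top _ _) fun x _ => hout x)
    _ ≤ ‖t‖ * R + 2 * ν.real sᶜ := by
        grw [mul_le_of_le_one_right (by positivity) measureReal_le_one]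

lemma tendsto_charFun_of_isTightFamily {ι : Type*} {l : Filter ι} {ν : ι → Measure ℝ}
    [∀ i, IsProbabilityMeasure (ν i)] (hν : IsTightFamily ν) {t : ι → ℝ}
    (ht : Tendsto t l (𝓝 0)) : Tendsto (fun i => charFun (ν i) (t i)) l (𝓝 1) := by
  rw [Metric.tendsto_nhds]
  intro ε hε
  obtain ⟨K, hK, hKν⟩ := hν (ENNReal.ofReal (ε / 4)) (by simp [hε])
  obtain ⟨R, hR, hKR⟩ := hK.isBounded.subset_closedBall_lt 0 0
  have htail (i : ι) : (ν i).real (Metric.closedBall 0 R)ᶜ ≤ ε / 4 := by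
    refine ENNReal.toReal_le_of_le_ofReal (by positivity) ?_
    calc ν i (Metric.closedBall 0 R)ᶜ ≤ ν i Kᶜ := measure_mono (Set.compl_subset_compl.2 hKR)
      _ ≤ ENNReal.ofReal (ε / 4) := by
        rw [prob_compl_eq_one_sub hK.measurableSet]
        exact tsub_le_iff_left.2 (tsub_le_iff_right.1 (hKν i).le)
  have hsmall : ∀ᶠ i in l, ‖t i‖ * R < ε / 2 := by
    have : Tendsto (fun i => ‖t i‖ * R) l (𝓝 0) := by simpa using ht.norm.mul_const R
    exact this.eventually (gt_mem_nhds (by positivity))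
  filter_upwards [hsmall] with i hi
  rw [dist_eq_norm]
  linarith [norm_charFun_sub_one_le (ν i) (t i) hR.le, htail i]

lemma tendsto_ft_of_isTightFamily {ι : Type*} {l : Filter ι} {ν : ι → Measure ℝ}
    [∀ i, IsProbabilityMeasure (ν i)] (hν : IsTightFamily ν) {ξ : ι → ℝ}
    (hξ : Tendsto ξ l (𝓝 0)) : Tendsto (fun i => ft (ν i) (ξ i)) l (𝓝 1) := by
  simp only [ft_eq_charFun]
  exact tendsto_charFun_of_isTightFamily hν (by simpa using hξ.const_mul (-2 * Real.pi))

lemma tendsto_prod_Icc_atTop {N : ℕ → ℕ} (hN : ∀ k ≥ 1, 2 ≤ N k) :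
    Tendsto (fun k => ∏ i ∈ Icc 1 k, (N i : ℝ)) atTop atTop := by
  refine tendsto_atTop_mono (fun k => ?_) (tendsto_pow_atTop_atTop_of_one_lt one_lt_two)
  have h : 2 ^ k ≤ ∏ i ∈ Icc 1 k, N i := by
    simpa using Finset.pow_card_le_prod (Icc 1 k) N 2 fun i hi => hN i (Finset.mem_Icc.1 hi).1
  exact_mod_cast h

theorem stmt11
    (N : ℕ → ℕ) (B : ℕ → Finset ℤ) (μ : Measure ℝ) (ν : ℕ → Measure ℝ)
    (hcard : ∀ k ≥ 1, 2 ≤ (B k).card) (hcN : ∀ k ≥ 1, (B k).card ≤ N k)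
    (hμ : IsInfiniteConv N B μ)
    (hν : ∀ k ≥ 1, IsNuGt N B k (ν k))
    (htight : IsTightFamily fun k => ν (k + 1)) :
    {ξ : ℝ | ft μ ξ = 0} =
      ⋃ k, ⋃ (_ : 1 ≤ k),
        (fun x : ℝ => (∏ i ∈ Finset.Icc 1 k, (N i : ℝ)) * x) '' {ξ : ℝ | MB (B k) ξ = 0} := by
  have hB (k : ℕ) (hk : k ≥ 1) : (B k).Nonempty := Finset.card_pos.1 (by linarith [hcard k hk])
  have hN2 (k : ℕ) (hk : k ≥ 1) : 2 ≤ N k := (hcard k hk).trans (hcN k hk)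
  have hN (k : ℕ) (hk : k ≥ 1) : N k ≠ 0 := by linarith [hN2 k hk]
  have hfactor (k : ℕ) (hk : 1 ≤ k) := ft_eq_ft_partialConv_mul_ft_tail hB hN hμ (hν k hk)
  ext ξ
  simp only [Set.mem_ofPred_eq, Set.mem_iUnion, Set.mem_image, exists_prop]
  constructor
  · intro hξ
    by_contra! hξ'
    have hpartial (k : ℕ) : ft (partialConv N B k) ξ ≠ 0 := by
      rw [ft_partialConv hB hN, Finset.prod_ne_zero_iff]
      exact fun j hj hzero => hξ' j (Finset.mem_Icc.1 hj).1 _ hzero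
        (mul_div_cancel₀ _ (prod_Icc_natCast_ne_zero hN j))
    have htail (k : ℕ) : ft (ν (k + 1)) (ξ / ∏ i ∈ Icc 1 (k + 1), (N i : ℝ)) = 0 := by
      have h := hfactor (k + 1) (by omega) ξ
      rw [hξ, eq_comm, mul_eq_zero] at h
      exact h.resolve_left (hpartial _)
    have : ∀ k, IsProbabilityMeasure (ν (k + 1)) := fun k => (hν (k + 1) (by omega)).1
    have hscale := (tendsto_prod_Icc_atTop hN2).comp (tendsto_add_atTop_nat 1)
    have hlim := tendsto_ft_of_isTightFamily htight ((tendsto_const_nhds (x := ξ)).div_atTop hscale)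
    simp only [Function.comp_def, htail] at hlim
    exact zero_ne_one (tendsto_nhds_unique tendsto_const_nhds hlim)
  · rintro ⟨k, hk, x, hx, rfl⟩
    rw [hfactor k hk, ft_partialConv hB hN,
      Finset.prod_eq_zero (Finset.mem_Icc.2 ⟨hk, le_rfl⟩), zero_mul]
    rwa [mul_div_cancel_left₀ _ (prod_Icc_natCast_ne_zero hN k)]
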